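/- Let A be a finite commutative BCK-algebra whose order is a rooted tree with a single atom e (each interval [0,a] is a chain), and let B be a subalgebra of A. If there exist a, b ∈ B with gcd(h(a), h(b)) = 1 (where h denotes height in A), then B contains the atom e and B is a downward closed subset of A. -/
import Mathlib

structure CBCK (α : Type*) where
  sub : α → α → α
  zero : α
  sub_zero : ∀ x, sub x zero = x
  zero_sub : ∀ x, sub zero x = zero
  comm : ∀ x y, sub x (sub x y) = sub y (sub y x)
  exch : ∀ x y z, sub (sub x y) z = sub (sub x z) y

namespace CBCK

variable {α : Type*}

/-- The induced order: `x ≤ y` iff `x ⊖ y = 0`. -/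
def le (A : CBCK α) (x y : α) : Prop := A.sub x y = A.zero

def lt (A : CBCK α) (x y : α) : Prop := A.le x y ∧ x ≠ y

/-- The meet `x ∧ y = x ⊖ (x ⊖ y)`. -/
def meet (A : CBCK α) (x y : α) : α := A.sub x (A.sub x y)

/-- An atom: a minimal nonzero element. -/
def atom (A : CBCK α) (e : α) : Prop := e ≠ A.zero ∧ ∀ x, A.lt x e → x = A.zero

/-- A maximal element. -/
def maximal (A : CBCK α) (m : α) : Prop := ∀ x, A.le m x → x = m

/-- A branching element: `b` with `c, d > b` and `c ∧ d = b`. -/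
def branching (A : CBCK α) (b : α) : Prop :=
  ∃ c d, A.lt b c ∧ A.lt b d ∧ A.meet c d = b

/-- The rooted-tree condition: every interval `[0, a]` is a chain. -/
def chainIntervals (A : CBCK α) : Prop :=
  ∀ a x y, A.le x a → A.le y a → A.le x y ∨ A.le y x

/-- The height of an element: `h(a) = |[0,a]| - 1`. -/
noncomputable def height (A : CBCK α) (a : α) : ℕ :=
  ({x | A.le x a} : Set α).ncard - 1

/-- Iterated subtraction: `x ⊖ 0·y = x`, `x ⊖ (k+1)·y = (x ⊖ k·y) ⊖ y`. -/
def isub (A : CBCK α) (x : α) : ℕ → α → α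
  | 0, _ => x
  | k + 1, y => A.sub (A.isub x k y) y

/-- A subalgebra universe: contains `0` and is closed under `⊖`. -/
def IsSub (A : CBCK α) (B : Set α) : Prop :=
  A.zero ∈ B ∧ ∀ x ∈ B, ∀ y ∈ B, A.sub x y ∈ B

/-- The subalgebra generated by `S`: the least `⊖`-closed subset containing `S ∪ {0}`. -/
def gen (A : CBCK α) (S : Set α) : Set α :=
  ⋂₀ {B : Set α | A.IsSub B ∧ S ⊆ B}

end CBCK

namespace CBCK

variable {α : Type*} (A : CBCK α)

theorem sub_self (x : α) : A.sub x x = A.zero := by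
  have h := A.comm x A.zero
  rw [A.sub_zero, A.zero_sub] at h
  exact h

theorem le_refl (x : α) : A.le x x := A.sub_self x

theorem zero_le (x : α) : A.le A.zero x := A.zero_sub x

theorem le_zero {x : α} (h : A.le x A.zero) : x = A.zero := by
  have := A.sub_zero x
  rw [h] at this; exact this.symm

theorem eq_sub_of_le {x y : α} (h : A.le x y) : A.sub y (A.sub y x) = x := by
  have hc := A.comm y x
  rw [h, A.sub_zero] at hc
  exact hc

theorem le_antisymm {x y : α} (h1 : A.le x y) (h2 : A.le y x) : x = y := by
  have := A.eq_sub_of_le h1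
  rw [h2, A.sub_zero] at this
  exact this.symm

theorem le_trans {x y z : α} (h1 : A.le x y) (h2 : A.le y z) : A.le x z := by
  have hx : A.sub y (A.sub y x) = x := A.eq_sub_of_le h1
  show A.sub x z = A.zero
  rw [← hx, A.exch, h2, A.zero_sub]

theorem sub_le (x y : α) : A.le (A.sub x y) x := by
  show A.sub (A.sub x y) x = A.zero
  rw [A.exch, A.sub_self, A.zero_sub]

theorem sub_le_sub_left {x y : α} (h : A.le x y) (z : α) :
    A.le (A.sub x z) (A.sub y z) := by
  have hx : A.sub y (A.sub y x) = x := A.eq_sub_of_le h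
  show A.sub (A.sub x z) (A.sub y z) = A.zero
  calc A.sub (A.sub x z) (A.sub y z)
      = A.sub (A.sub (A.sub y (A.sub y x)) z) (A.sub y z) := by rw [hx]
    _ = A.sub (A.sub (A.sub y z) (A.sub y x)) (A.sub y z) := by
        rw [A.exch y (A.sub y x) z]
    _ = A.sub (A.sub (A.sub y z) (A.sub y z)) (A.sub y x) := by
        rw [A.exch (A.sub y z) (A.sub y x) (A.sub y z)]
    _ = A.zero := by rw [A.sub_self, A.zero_sub]

theorem sub_le_sub_right {z y : α} (h : A.le z y) (x : α) :
    A.le (A.sub x y) (A.sub x z) := by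
  show A.sub (A.sub x y) (A.sub x z) = A.zero
  rw [A.exch]
  have h1 : A.le (A.sub x (A.sub x z)) z := by
    rw [A.comm]; exact A.sub_le z (A.sub z x)
  exact A.le_trans h1 h

theorem le_meet {z x y : α} (h1 : A.le z x) (h2 : A.le z y) : A.le z (A.meet x y) := by
  have e1 : A.sub x (A.sub x z) = z := A.eq_sub_of_le h1
  have e2 : A.le (A.sub x y) (A.sub x z) := A.sub_le_sub_right h2 x
  have e3 : A.le (A.sub x (A.sub x z)) (A.sub x (A.sub x y)) := A.sub_le_sub_right e2 x
  rw [e1] at e3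
  exact e3

theorem height_lt [Fintype α] {x y : α} (h : A.lt x y) : A.height x < A.height y := by
  have hss : ({z | A.le z x} : Set α) ⊂ {z | A.le z y} := by
    constructor
    · intro z hz; exact A.le_trans hz h.1
    · intro hsub
      have hy : y ∈ ({z | A.le z y} : Set α) := A.le_refl y
      have : A.le y x := hsub hy
      exact h.2 (A.le_antisymm h.1 this)
  have hc := Set.ncard_lt_ncard hss (Set.toFinite _)
  have p1 : 0 < ({z | A.le z x} : Set α).ncard :=
    (Set.ncard_pos (Set.toFinite _)).mpr ⟨x, A.le_refl x⟩
  simp only [CBCK.height]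
  omega

theorem height_le [Fintype α] {x y : α} (h : A.le x y) : A.height x ≤ A.height y := by
  by_cases hxy : x = y
  · subst hxy; exact Nat.le_refl _
  · exact Nat.le_of_lt (A.height_lt ⟨h, hxy⟩)

theorem eq_of_le_of_height_le [Fintype α] {x y : α} (h : A.le x y)
    (hh : A.height y ≤ A.height x) : x = y := by
  by_contra hne
  have := A.height_lt ⟨h, hne⟩
  omega

theorem height_zero [Fintype α] : A.height A.zero = 0 := by
  have hset : ({z | A.le z A.zero} : Set α) = {A.zero} := by
    ext z
    simp only [Set.mem_setOf_eq, Set.mem_singleton_iff]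
    exact ⟨fun h => A.le_zero h, fun h => h ▸ A.le_refl _⟩
  simp only [CBCK.height, hset, Set.ncard_singleton]

theorem height_pos [Fintype α] {x : α} (hx : x ≠ A.zero) : 0 < A.height x := by
  have := A.height_lt (x := A.zero) (y := x) ⟨A.zero_le x, Ne.symm hx⟩
  rw [A.height_zero] at this
  omega

theorem height_eq_zero [Fintype α] {x : α} (h : A.height x = 0) : x = A.zero := by
  by_contra hx
  have := A.height_pos hx
  omega

theorem atom_of_height_one [Fintype α] {x : α} (h : A.height x = 1) : A.atom x := by
  constructor
  · intro hx0; rw [hx0, A.height_zero] at h; exact one_ne_zero h.symm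
  · intro z hz
    have := A.height_lt hz
    exact A.height_eq_zero (by omega)

theorem height_atom [Fintype α] {e : α} (he : A.atom e) : A.height e = 1 := by
  have hset : ({z | A.le z e} : Set α) = {A.zero, e} := by
    ext z
    simp only [Set.mem_setOf_eq, Set.mem_insert_iff, Set.mem_singleton_iff]
    constructor
    · intro hz
      by_cases hze : z = e
      · exact Or.inr hze
      · exact Or.inl (he.2 z ⟨hz, hze⟩)
    · rintro (rfl | rfl)
      · exact A.zero_le _
      · exact A.le_refl _
  rw [CBCK.height, hset, Set.ncard_pair (Ne.symm he.1)]

theorem atom_le [Fintype α] (e : α) (he : A.atom e) (huniq : ∀ x, A.atom x → x = e) :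
    ∀ x, x ≠ A.zero → A.le e x := by
  suffices H : ∀ n x, A.height x ≤ n → x ≠ A.zero → A.le e x by
    intro x hx; exact H (A.height x) x (Nat.le_refl _) hx
  intro n
  induction n with
  | zero =>
    intro x h1 h2
    exact absurd (A.height_eq_zero (by omega)) h2
  | succ n ih =>
    intro x h1 h2
    by_cases hax : A.atom x
    · rw [huniq x hax]; exact A.le_refl _
    · rw [CBCK.atom] at hax
      push_neg at hax
      obtain ⟨z, hz1, hz2⟩ := hax h2
      have := A.height_lt hz1
      exact A.le_trans (ih z (by omega) hz2) hz1.1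

theorem height_sub [Fintype α] (hch : A.chainIntervals) {x y : α} (h : A.le y x) :
    A.height (A.sub x y) = A.height x - A.height y := by
  classical
  have hxy : A.sub x (A.sub x y) = y := A.eq_sub_of_le h
  -- ψ : [0, x⊖y] → [y, x]
  have hpsi_mem : ∀ z ∈ ({z | A.le z (A.sub x y)} : Set α),
      (fun z => A.sub x (A.sub (A.sub x y) z)) z ∈ ({w | A.le y w ∧ A.le w x} : Set α) := by
    intro z _
    refine ⟨?_, A.sub_le _ _⟩
    have h1 : A.le (A.sub (A.sub x y) z) (A.sub x y) := A.sub_le _ _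
    have h2 := A.sub_le_sub_right h1 x
    rwa [hxy] at h2
  have key1 : ∀ z ∈ ({z | A.le z (A.sub x y)} : Set α),
      A.sub (A.sub x (A.sub (A.sub x y) z)) y = z := by
    intro z hz
    rw [A.exch]
    exact A.eq_sub_of_le hz
  have hpsi_inj : Set.InjOn (fun z => A.sub x (A.sub (A.sub x y) z))
      ({z | A.le z (A.sub x y)} : Set α) := by
    intro z1 hz1 z2 hz2 heq
    have heq' : A.sub x (A.sub (A.sub x y) z1) = A.sub x (A.sub (A.sub x y) z2) := heq
    calc z1 = A.sub (A.sub x (A.sub (A.sub x y) z1)) y := (key1 z1 hz1).symm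
      _ = A.sub (A.sub x (A.sub (A.sub x y) z2)) y := by rw [heq']
      _ = z2 := key1 z2 hz2
  -- φ : [y, x] → [0, x⊖y]
  have hphi_mem : ∀ w ∈ ({w | A.le y w ∧ A.le w x} : Set α),
      (fun w => A.sub w y) w ∈ ({z | A.le z (A.sub x y)} : Set α) := by
    intro w hw
    exact A.sub_le_sub_left hw.2 y
  have key2 : ∀ w1 ∈ ({w | A.le y w ∧ A.le w x} : Set α),
      ∀ w2 ∈ ({w | A.le y w ∧ A.le w x} : Set α),
      A.le w1 w2 → A.sub w1 y = A.sub w2 y → w1 = w2 := by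
    intro w1 hw1 w2 _ hle heq
    have ht1 : A.le (A.sub w2 w1) (A.sub w2 y) := A.sub_le_sub_right hw1.1 w2
    have hw : A.sub w2 (A.sub w2 w1) = w1 := A.eq_sub_of_le hle
    have hs : A.sub (A.sub w2 y) (A.sub w2 w1) = A.sub w2 y := by
      rw [A.exch, hw, heq]
    have ht0 : A.sub w2 w1 = A.zero := by
      have hthis := A.eq_sub_of_le ht1
      rw [hs, A.sub_self] at hthis
      exact hthis.symm
    exact A.le_antisymm hle ht0
  have hphi_inj : Set.InjOn (fun w => A.sub w y) ({w | A.le y w ∧ A.le w x} : Set α) := by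
    intro w1 hw1 w2 hw2 heq
    have heq' : A.sub w1 y = A.sub w2 y := heq
    rcases hch x w1 w2 hw1.2 hw2.2 with h12 | h21
    · exact key2 w1 hw1 w2 hw2 h12 heq'
    · exact (key2 w2 hw2 w1 hw1 h21 heq'.symm).symm
  have hcard1 : ({z | A.le z (A.sub x y)} : Set α).ncard
      = ({w | A.le y w ∧ A.le w x} : Set α).ncard :=
    Nat.le_antisymm
      (Set.ncard_le_ncard_of_injOn _ hpsi_mem hpsi_inj (Set.toFinite _))
      (Set.ncard_le_ncard_of_injOn _ hphi_mem hphi_inj (Set.toFinite _))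
  have hunion : ({z | A.le z x} : Set α)
      = {z | A.le z y} ∪ {w | A.le y w ∧ A.le w x} := by
    ext w
    simp only [Set.mem_setOf_eq, Set.mem_union]
    constructor
    · intro hw
      rcases hch x w y hw h with h1 | h2
      · exact Or.inl h1
      · exact Or.inr ⟨h2, hw⟩
    · rintro (h1 | ⟨_, h3⟩)
      · exact A.le_trans h1 h
      · exact h3
  have hinter : ({z | A.le z y} : Set α) ∩ {w | A.le y w ∧ A.le w x} = {y} := by
    ext w
    simp only [Set.mem_inter_iff, Set.mem_setOf_eq, Set.mem_singleton_iff]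
    constructor
    · rintro ⟨h1, h2, _⟩
      exact A.le_antisymm h1 h2
    · rintro rfl
      exact ⟨A.le_refl _, A.le_refl _, h⟩
  have hu := Set.ncard_union_add_ncard_inter ({z | A.le z y} : Set α)
      ({w | A.le y w ∧ A.le w x} : Set α) (Set.toFinite _) (Set.toFinite _)
  rw [← hunion, hinter, Set.ncard_singleton] at hu
  have p1 : 0 < ({z | A.le z (A.sub x y)} : Set α).ncard :=
    (Set.ncard_pos (Set.toFinite _)).mpr ⟨A.zero, A.zero_sub _⟩
  have p2 : 0 < ({z | A.le z y} : Set α).ncard :=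
    (Set.ncard_pos (Set.toFinite _)).mpr ⟨A.zero, A.zero_sub _⟩
  simp only [CBCK.height]
  omega

theorem gcd_sub_aux {m n : ℕ} (h : n ≤ m) : Nat.gcd (m - n) n = Nat.gcd m n := by
  apply Nat.dvd_antisymm
  · have h1 : Nat.gcd (m - n) n ∣ m := by
      have := Nat.dvd_add (Nat.gcd_dvd_left (m - n) n) (Nat.gcd_dvd_right (m - n) n)
      rwa [Nat.sub_add_cancel h] at this
    exact Nat.dvd_gcd h1 (Nat.gcd_dvd_right _ _)
  · exact Nat.dvd_gcd (Nat.dvd_sub (Nat.gcd_dvd_left m n) (Nat.gcd_dvd_right m n))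
      (Nat.gcd_dvd_right m n)

theorem euclid [Fintype α] (hch : A.chainIntervals) {B : Set α} (hB : A.IsSub B) (m : α) :
    ∀ n x y, x ∈ B → y ∈ B → A.le x m → A.le y m →
      A.height x + A.height y ≤ n →
      ∃ w ∈ B, A.le w m ∧ A.height w = Nat.gcd (A.height x) (A.height y) := by
  intro n
  induction n with
  | zero =>
    intro x y hx _ hxm _ hn
    have hx0 : x = A.zero := A.height_eq_zero (by omega)
    have hy0 : A.height y = 0 := by omega
    refine ⟨x, hx, hxm, ?_⟩
    rw [hx0, A.height_zero, hy0, Nat.gcd_zero_left]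
  | succ n ih =>
    intro x y hx hy hxm hym hn
    by_cases hy0 : y = A.zero
    · subst hy0
      exact ⟨x, hx, hxm, by rw [A.height_zero, Nat.gcd_zero_right]⟩
    by_cases hx0 : x = A.zero
    · subst hx0
      exact ⟨y, hy, hym, by rw [A.height_zero, Nat.gcd_zero_left]⟩
    have hxpos := A.height_pos hx0
    have hypos := A.height_pos hy0
    rcases hch m x y hxm hym with hxy | hyx
    · -- x ≤ y : replace y by y ⊖ x
      have hsB : A.sub y x ∈ B := hB.2 y hy x hx
      have hsm : A.le (A.sub y x) m := A.le_trans (A.sub_le y x) hym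
      have hle : A.height x ≤ A.height y := A.height_le hxy
      have hs : A.height (A.sub y x) = A.height y - A.height x := A.height_sub hch hxy
      obtain ⟨w, hwB, hwm, hw⟩ := ih x (A.sub y x) hx hsB hxm hsm (by omega)
      refine ⟨w, hwB, hwm, ?_⟩
      rw [hw, hs, Nat.gcd_comm, gcd_sub_aux hle, Nat.gcd_comm]
    · -- y ≤ x : replace x by x ⊖ y
      have hsB : A.sub x y ∈ B := hB.2 x hx y hy
      have hsm : A.le (A.sub x y) m := A.le_trans (A.sub_le x y) hxm
      have hle : A.height y ≤ A.height x := A.height_le hyx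
      have hs : A.height (A.sub x y) = A.height x - A.height y := A.height_sub hch hyx
      obtain ⟨w, hwB, hwm, hw⟩ := ih (A.sub x y) y hsB hy hsm hym (by omega)
      refine ⟨w, hwB, hwm, ?_⟩
      rw [hw, hs, gcd_sub_aux hle]

theorem dclosed [Fintype α] (hch : A.chainIntervals) (e : α) (he : A.atom e)
    (huniq : ∀ x, A.atom x → x = e)
    {B : Set α} (hB : A.IsSub B) (heB : e ∈ B) :
    ∀ x y, y ∈ B → A.le x y → x ∈ B := by
  suffices H : ∀ n y, A.height y ≤ n → y ∈ B → ∀ x, A.le x y → x ∈ B by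
    intro x y hy hxy; exact H (A.height y) y (Nat.le_refl _) hy x hxy
  intro n
  induction n with
  | zero =>
    intro y hy hyB x hxy
    have hy0 : y = A.zero := A.height_eq_zero (by omega)
    subst hy0
    rw [A.le_zero hxy]
    exact hB.1
  | succ n ih =>
    intro y hy hyB x hxy
    by_cases hxeq : x = y
    · subst hxeq; exact hyB
    have hlt := A.height_lt ⟨hxy, hxeq⟩
    have hy0 : y ≠ A.zero := by
      intro hz; rw [hz, A.height_zero] at hlt; omega
    have hey : A.le e y := A.atom_le e he huniq y hy0
    have hyeB : A.sub y e ∈ B := hB.2 y hyB e heB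
    have hse : A.height (A.sub y e) = A.height y - A.height e := A.height_sub hch hey
    rw [A.height_atom he] at hse
    rcases hch y x (A.sub y e) hxy (A.sub_le y e) with h1 | h2
    · exact ih (A.sub y e) (by omega) hyeB x h1
    · have heq : A.sub y e = x := A.eq_of_le_of_height_le h2 (by omega)
      rw [← heq]
      exact hyeB

end CBCK

/-- If a subalgebra `B` of a finite single-atom rooted-tree cBCK-algebra
contains elements `a, b` with coprime heights, then `B` contains the atom and
is downward closed. -/
theorem stmt9 {α : Type*} [Fintype α] (A : CBCK α)
    (hchain : A.chainIntervals)
    (e : α) (he : A.atom e) (huniq : ∀ x, A.atom x → x = e)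
    (B : Set α) (hB : A.IsSub B)
    (a b : α) (ha : a ∈ B) (hb : b ∈ B)
    (hgcd : Nat.gcd (A.height a) (A.height b) = 1) :
    e ∈ B ∧ ∀ x y, y ∈ B → A.le x y → x ∈ B := by
  classical
  by_cases ha0 : a = A.zero
  · rw [ha0, A.height_zero, Nat.gcd_zero_left] at hgcd
    have hbe : b = e := huniq b (A.atom_of_height_one hgcd)
    have heB : e ∈ B := hbe ▸ hb
    exact ⟨heB, A.dclosed hchain e he huniq hB heB⟩
  by_cases hb0 : b = A.zero
  · rw [hb0, A.height_zero, Nat.gcd_zero_right] at hgcd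
    have hae : a = e := huniq a (A.atom_of_height_one hgcd)
    have heB : e ∈ B := hae ▸ ha
    exact ⟨heB, A.dclosed hchain e he huniq hB heB⟩
  -- both nonzero
  have hea : A.le e a := A.atom_le e he huniq a ha0
  have heb : A.le e b := A.atom_le e he huniq b hb0
  have hcB : A.meet a b ∈ B := hB.2 a ha _ (hB.2 a ha b hb)
  have hec : A.le e (A.meet a b) := A.le_meet hea heb
  set c := A.meet a b with hc_def
  have hc0 : c ≠ A.zero := by
    intro h
    rw [h] at hec
    exact he.1 (A.le_zero hec)
  have hca : A.le c a := A.sub_le a (A.sub a b)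
  have hcb : A.le c b := by
    have : c = A.sub b (A.sub b a) := A.comm a b
    rw [this]
    exact A.sub_le b (A.sub b a)
  have hcpos := A.height_pos hc0
  obtain ⟨u, huB, hua, hu⟩ := A.euclid hchain hB a (A.height a + A.height c)
    a c ha hcB (A.le_refl a) hca (Nat.le_refl _)
  obtain ⟨v, hvB, hvb, hv⟩ := A.euclid hchain hB b (A.height b + A.height c)
    b c hb hcB (A.le_refl b) hcb (Nat.le_refl _)
  have huc : A.le u c := by
    have hdvd : A.height u ∣ A.height c := by
      rw [hu]; exact Nat.gcd_dvd_right _ _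
    have hle : A.height u ≤ A.height c := Nat.le_of_dvd hcpos hdvd
    rcases hchain a u c hua hca with h1 | h2
    · exact h1
    · rw [← A.eq_of_le_of_height_le h2 hle]
      exact A.le_refl c
  have hvc : A.le v c := by
    have hdvd : A.height v ∣ A.height c := by
      rw [hv]; exact Nat.gcd_dvd_right _ _
    have hle : A.height v ≤ A.height c := Nat.le_of_dvd hcpos hdvd
    rcases hchain b v c hvb hcb with h1 | h2
    · exact h1
    · rw [← A.eq_of_le_of_height_le h2 hle]
      exact A.le_refl c
  obtain ⟨w, hwB, hwc, hw⟩ := A.euclid hchain hB c (A.height u + A.height v)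
    u v huB hvB huc hvc (Nat.le_refl _)
  have d1 : A.height w ∣ A.height a := by
    rw [hw, hu]
    exact (Nat.gcd_dvd_left _ _).trans (Nat.gcd_dvd_left _ _)
  have d2 : A.height w ∣ A.height b := by
    rw [hw, hv]
    exact (Nat.gcd_dvd_right _ _).trans (Nat.gcd_dvd_left _ _)
  have hdvd1 : A.height w ∣ 1 := by
    rw [← hgcd]
    exact Nat.dvd_gcd d1 d2
  have hw1 : A.height w = 1 := Nat.dvd_one.mp hdvd1
  have hwe : w = e := huniq w (A.atom_of_height_one hw1)
  have heB : e ∈ B := hwe ▸ hwB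
  exact ⟨heB, A.dclosed hchain e he huniq hB heB⟩
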